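/- arXiv:2304.12626 — 6 statements merged into one kernel-verified Lean document; each statement's English description precedes it below -/
import Mathlib

section
/- Let n ≥ 3 and consider a best-worst method matrix with best alternative B and worst alternative W, i.e., positive reciprocal entries a_{Bj}, a_{jB}, a_{Wj}, a_{jW} are given for all j. If a vector y ∈ ℝ^n satisfies the logarithmic least squares normal equations L y = r (where L is the graph Laplacian of the star-pair comparison graph and r_i is the sum of logarithms of the known entries in row i) together with the normalization ∑_i y_i = 0, then n·y_B = log(∏_{k=1}^n a_{Bk}) and n·y_W = log(∏_{k=1}^n a_{Wk}). -/
open Finset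

/-!
The rows of `B` and `W` in the Laplacian are `n eᵢ - 𝟙`, because both hubs are adjacent to every
other vertex. Under the normalisation `∑ y = 0` these rows of `L y = r` therefore read `n yᵢ = rᵢ`,
and `rᵢ` is the logarithm of the full row product `∏ₖ aᵢₖ`, since every entry of a hub row is known.
-/

theorem sum_ite_sub_one_mul {ι : Type*} [Fintype ι] [DecidableEq ι] (i : ι) (c : ℝ)
    (y : ι → ℝ) : ∑ j, ((if j = i then c else 0) - 1) * y j = c * y i - ∑ j, y j := by
  simp only [sub_mul, one_mul, sum_sub_distrib, ite_mul, zero_mul, sum_ite_eq', mem_univ,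
    if_true]

theorem bwm_llsm_best_worst_rows_general (n : ℕ) (B W : Fin n)
    (a : Fin n → Fin n → ℝ)
    (L : Fin n → Fin n → ℝ)
    (hL : ∀ i j : Fin n, L i j =
      if i = j then (if i = B ∨ i = W then (n : ℝ) - 1 else 2)
      else (if i = B ∨ i = W ∨ j = B ∨ j = W then -1 else 0))
    (r : Fin n → ℝ)
    (hr : ∀ i : Fin n, r i =
      Real.log (∏ j ∈ univ.filter (fun j => i = B ∨ i = W ∨ j = B ∨ j = W), a i j))
    (y : Fin n → ℝ)
    (hsys : ∀ i, ∑ j, L i j * y j = r i)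
    (hnorm : ∑ i, y i = 0) :
    (n : ℝ) * y B = Real.log (∏ k, a B k) ∧
    (n : ℝ) * y W = Real.log (∏ k, a W k) := by
  have hub : ∀ i, (i = B ∨ i = W) → (n : ℝ) * y i = Real.log (∏ k, a i k) := by
    intro i hi
    have hrow : ∀ j, L i j = (if j = i then (n : ℝ) else 0) - 1 := by
      intro j
      rw [hL]
      rcases eq_or_ne j i with rfl | hji
      · simp [hi]
      · simp [hji, hji.symm, hi.imp id Or.inl]
    have hknown : univ.filter (fun j => i = B ∨ i = W ∨ j = B ∨ j = W) = univ :=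
      filter_true_of_mem fun _ _ => hi.elim Or.inl (Or.inr ∘ Or.inl)
    calc (n : ℝ) * y i = ∑ j, L i j * y j := by
          simp only [hrow, sum_ite_sub_one_mul, hnorm, sub_zero]
      _ = Real.log (∏ k, a i k) := by rw [hsys, hr, hknown]
  exact ⟨hub B (.inl rfl), hub W (.inr rfl)⟩

/-- For a best-worst method matrix (known entries in rows/columns of the
best alternative `B` and worst alternative `W`), any solution `y` of the normalized
logarithmic least squares normal equations `L y = r`, `∑ y = 0` satisfies
`n·y_B = log ∏ a_{Bk}` and `n·y_W = log ∏ a_{Wk}`. -/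
theorem bwm_llsm_best_worst_rows (n : ℕ) (hn : 3 ≤ n) (B W : Fin n) (hBW : B ≠ W)
    (a : Fin n → Fin n → ℝ)
    (hpos : ∀ i j : Fin n, (i = B ∨ i = W ∨ j = B ∨ j = W) → 0 < a i j)
    (hdiag : ∀ i, a i i = 1)
    (hrec : ∀ i j : Fin n, (i = B ∨ i = W ∨ j = B ∨ j = W) → a i j * a j i = 1)
    (L : Fin n → Fin n → ℝ)
    (hL : ∀ i j : Fin n, L i j =
      if i = j then (if i = B ∨ i = W then (n : ℝ) - 1 else 2)
      else (if i = B ∨ i = W ∨ j = B ∨ j = W then -1 else 0))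
    (r : Fin n → ℝ)
    (hr : ∀ i : Fin n, r i =
      Real.log (∏ j ∈ univ.filter (fun j => i = B ∨ i = W ∨ j = B ∨ j = W), a i j))
    (y : Fin n → ℝ)
    (hsys : ∀ i, ∑ j, L i j * y j = r i)
    (hnorm : ∑ i, y i = 0) :
    (n : ℝ) * y B = Real.log (∏ k, a B k) ∧
    (n : ℝ) * y W = Real.log (∏ k, a W k) :=
  bwm_llsm_best_worst_rows_general n B W a L hL r hr y hsys hnorm
end

section
/- Suppose p > 1 and a best-worst method matrix on n ≥ 3 alternatives satisfies: a_{Bk} ≥ p for all k ≠ B, a_{kW} ≥ p (equivalently a_{Wk} ≤ 1/p) for all k ≠ W, and every entry is at most p^3. Then the logarithmic least squares priority vector w (with w_i = exp(y_i), y the unique normalized LLSM solution) satisfies w_B ≥ w_j and w_j ≥ w_W for every alternative j; i.e., there is no ordinal violation. -/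
/-!
In log coordinates `b k = log a_{Bk}` and `c k = log a_{kW}` the LLSM equations read
`n y_B = ∑ b`, `n y_W = -∑ c` and `2 y_j - y_B - y_W = c_j - b_j`, so
`2 n (y_B - y_j) = ∑ b + ∑ c - n c_j + n b_j`. Bounding by `log p` from below every term of the
two sums other than the `j`-th and the vanishing `b_B`, `c_W` leaves `(n + 1) b_j - (n - 1) c_j + 2 (n - 2) log p`, which is
nonnegative because `b_j ≥ log p` and `c_j ≤ 3 log p`. Exchanging the roles of `B` and `W`
(and of `b` and `c`, with `y` replaced by `-y`) gives `y_W ≤ y_j`, and `y_W ≤ y_B` holds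
because all `b k` and `c k` are nonnegative.
-/

open Finset

theorem log_eq_neg_log_of_mul_eq_one {x y : ℝ} (h : x * y = 1) : Real.log y = -Real.log x := by
  rw [eq_inv_of_mul_eq_one_right h, Real.log_inv]

theorem add_add_card_sub_two_mul_le_sum {ι : Type*} [Fintype ι] [DecidableEq ι]
    (f : ι → ℝ) (L : ℝ) {i j : ι} (hij : i ≠ j) (h : ∀ k, k ≠ i → k ≠ j → L ≤ f k) :
    f i + f j + (Fintype.card ι - 2) * L ≤ ∑ k, f k := by
  have hpair : ∑ k ∈ {i, j}, (f k - L) ≤ ∑ k, (f k - L) :=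
    sum_le_sum_of_subset_of_nonneg (subset_univ _) fun k _ hk => by
      simp only [mem_insert, mem_singleton, not_or] at hk
      linarith [h k hk.1 hk.2]
  rw [sum_pair hij, sum_sub_distrib, sum_const, card_univ, nsmul_eq_mul] at hpair
  linarith

section LLSM

variable {ι : Type*} [Fintype ι] (b c y : ι → ℝ) {B W : ι}

theorem llsm_le_best [DecidableEq ι] (L : ℝ) {j : ι} (hjB : j ≠ B) (hjW : j ≠ W)
    (hbB : 0 ≤ b B) (hcW : 0 ≤ c W) (hb : ∀ k, k ≠ B → L ≤ b k) (hc : ∀ k, k ≠ W → L ≤ c k)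
    (hcj : c j ≤ 3 * L)
    (hyB : Fintype.card ι * y B = ∑ k, b k) (hyW : Fintype.card ι * y W = -∑ k, c k)
    (hyj : 2 * y j - y B - y W = c j - b j) :
    y j ≤ y B := by
  have hn : (2 : ℝ) ≤ Fintype.card ι := by exact_mod_cast Fintype.one_lt_card_iff.mpr ⟨j, B, hjB⟩
  set n : ℝ := (Fintype.card ι : ℝ)
  have hsum_b := add_add_card_sub_two_mul_le_sum b L hjB fun k _ hk => hb k hk
  have hsum_c := add_add_card_sub_two_mul_le_sum c L hjW fun k _ hk => hc k hk
  have hbj : L ≤ b j := hb j hjB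
  have hgap : 0 ≤ n * (y B - y j) := by
    nlinarith [mul_nonneg (by linarith : (0 : ℝ) ≤ n + 1) (sub_nonneg.mpr hbj),
      mul_nonneg (by linarith : (0 : ℝ) ≤ n - 1) (sub_nonneg.mpr hcj)]
  exact sub_nonneg.mp (nonneg_of_mul_nonneg_right hgap (by linarith))

theorem llsm_worst_le [DecidableEq ι] (L : ℝ) {j : ι} (hjB : j ≠ B) (hjW : j ≠ W)
    (hbB : 0 ≤ b B) (hcW : 0 ≤ c W) (hb : ∀ k, k ≠ B → L ≤ b k) (hc : ∀ k, k ≠ W → L ≤ c k)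
    (hbj : b j ≤ 3 * L)
    (hyB : Fintype.card ι * y B = ∑ k, b k) (hyW : Fintype.card ι * y W = -∑ k, c k)
    (hyj : 2 * y j - y B - y W = c j - b j) :
    y W ≤ y j := by
  have hdual := llsm_le_best c b (-y) L hjW hjB hcW hbB hc hb hbj
    (by simp only [Pi.neg_apply, mul_neg, hyW, neg_neg]) (by simp only [Pi.neg_apply, mul_neg, hyB])
    (by simp only [Pi.neg_apply]; linarith)
  simpa using hdual

theorem llsm_worst_le_best (hb : ∀ k, 0 ≤ b k) (hc : ∀ k, 0 ≤ c k)
    (hyB : Fintype.card ι * y B = ∑ k, b k) (hyW : Fintype.card ι * y W = -∑ k, c k) :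
    y W ≤ y B := by
  have hn : (0 : ℝ) < Fintype.card ι := by exact_mod_cast Fintype.card_pos_iff.mpr ⟨B⟩
  have hgap : 0 ≤ (Fintype.card ι : ℝ) * (y B - y W) := by
    linarith [sum_nonneg fun k (_ : k ∈ univ) => hb k, sum_nonneg fun k (_ : k ∈ univ) => hc k]
  exact sub_nonneg.mp (nonneg_of_mul_nonneg_right hgap hn)

theorem llsm_best_worst_bounds [DecidableEq ι] {L : ℝ} (hL : 0 ≤ L)
    (hbB : b B = 0) (hcW : c W = 0) (hb : ∀ k, k ≠ B → L ≤ b k) (hc : ∀ k, k ≠ W → L ≤ c k)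
    (hb3 : ∀ k, b k ≤ 3 * L) (hc3 : ∀ k, c k ≤ 3 * L)
    (hyB : Fintype.card ι * y B = ∑ k, b k) (hyW : Fintype.card ι * y W = -∑ k, c k)
    (hyj : ∀ j, j ≠ B → j ≠ W → 2 * y j - y B - y W = c j - b j) :
    ∀ j, y j ≤ y B ∧ y W ≤ y j := by
  have hWB : y W ≤ y B := by
    refine llsm_worst_le_best b c y (fun k => ?_) (fun k => ?_) hyB hyW
    · rcases eq_or_ne k B with rfl | hk
      exacts [hbB.ge, hL.trans (hb k hk)]
    · rcases eq_or_ne k W with rfl | hk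
      exacts [hcW.ge, hL.trans (hc k hk)]
  intro j
  rcases eq_or_ne j B with rfl | hjB
  · exact ⟨le_rfl, hWB⟩
  rcases eq_or_ne j W with rfl | hjW
  · exact ⟨hWB, le_rfl⟩
  exact ⟨llsm_le_best b c y L hjB hjW hbB.ge hcW.ge hb hc (hc3 j) hyB hyW (hyj j hjB hjW),
    llsm_worst_le b c y L hjB hjW hbB.ge hcW.ge hb hc (hb3 j) hyB hyW (hyj j hjB hjW)⟩

end LLSM

theorem bwm_llsm_no_ordinal_violation_general (n : ℕ) (p : ℝ) (hp : 1 < p)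
    (B W : Fin n)
    (a : Fin n → Fin n → ℝ)
    (hpos : ∀ i j : Fin n, (i = B ∨ i = W ∨ j = B ∨ j = W) → 0 < a i j)
    (hdiag : ∀ i, a i i = 1)
    (hrec : ∀ i j : Fin n, (i = B ∨ i = W ∨ j = B ∨ j = W) → a i j * a j i = 1)
    (hB : ∀ k, k ≠ B → p ≤ a B k)
    (hW : ∀ k, k ≠ W → p ≤ a k W)
    (hub : ∀ i j : Fin n, (i = B ∨ i = W ∨ j = B ∨ j = W) → a i j ≤ p ^ 3)
    (y : Fin n → ℝ)
    (hyB : (n : ℝ) * y B = Real.log (∏ k, a B k))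
    (hyW : (n : ℝ) * y W = Real.log (∏ k, a W k))
    (hyj : ∀ j, j ≠ B → j ≠ W → 2 * y j - y B - y W = Real.log (a j B * a j W))
    (w : Fin n → ℝ) (hw : ∀ i, w i = Real.exp (y i)) :
    ∀ j, w j ≤ w B ∧ w W ≤ w j := by
  set b : Fin n → ℝ := fun k => Real.log (a B k)
  set c : Fin n → ℝ := fun k => Real.log (a k W)
  have hb : ∀ k, k ≠ B → Real.log p ≤ b k := fun k hk => Real.log_le_log (by linarith) (hB k hk)
  have hc : ∀ k, k ≠ W → Real.log p ≤ c k := fun k hk => Real.log_le_log (by linarith) (hW k hk)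
  have hbB : b B = 0 := by simp [b, hdiag]
  have hcW : c W = 0 := by simp [c, hdiag]
  have hb3 : ∀ k, b k ≤ 3 * Real.log p := fun k => by
    simpa [Real.log_pow] using Real.log_le_log (hpos B k (by simp)) (hub B k (by simp))
  have hc3 : ∀ k, c k ≤ 3 * Real.log p := fun k => by
    simpa [Real.log_pow] using Real.log_le_log (hpos k W (by simp)) (hub k W (by simp))
  have hyB' : (Fintype.card (Fin n) : ℝ) * y B = ∑ k, b k := by
    rw [Fintype.card_fin, hyB, Real.log_prod fun k _ => (hpos B k (by simp)).ne']
  have hyW' : (Fintype.card (Fin n) : ℝ) * y W = -∑ k, c k := by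
    rw [Fintype.card_fin, hyW, Real.log_prod fun k _ => (hpos W k (by simp)).ne', ← sum_neg_distrib]
    exact sum_congr rfl fun k _ => log_eq_neg_log_of_mul_eq_one (hrec k W (by simp))
  have hyj' : ∀ j, j ≠ B → j ≠ W → 2 * y j - y B - y W = c j - b j := fun j hjB hjW => by
    rw [hyj j hjB hjW, Real.log_mul (hpos j B (by simp)).ne' (hpos j W (by simp)).ne',
      log_eq_neg_log_of_mul_eq_one (hrec B j (by simp))]
    ring
  intro j
  simp only [hw, Real.exp_le_exp]
  exact llsm_best_worst_bounds b c y (Real.log_pos hp).le hbB hcW hb hc hb3 hc3 hyB' hyW' hyj' j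

/-- Theorem 1 of the paper: if `a_{Bk} ≥ p` for all `k ≠ B`,
`a_{kW} ≥ p` for all `k ≠ W`, and every (known) entry is at most `p^3`,
then the LLSM priorities `w_i = exp y_i` contain no ordinal violation:
`w_B ≥ w_j` and `w_j ≥ w_W` for every alternative `j`. -/
theorem bwm_llsm_no_ordinal_violation (n : ℕ) (hn : 3 ≤ n) (p : ℝ) (hp : 1 < p)
    (B W : Fin n) (hBW : B ≠ W)
    (a : Fin n → Fin n → ℝ)
    (hpos : ∀ i j : Fin n, (i = B ∨ i = W ∨ j = B ∨ j = W) → 0 < a i j)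
    (hdiag : ∀ i, a i i = 1)
    (hrec : ∀ i j : Fin n, (i = B ∨ i = W ∨ j = B ∨ j = W) → a i j * a j i = 1)
    (hB : ∀ k, k ≠ B → p ≤ a B k)
    (hW : ∀ k, k ≠ W → p ≤ a k W)
    (hub : ∀ i j : Fin n, (i = B ∨ i = W ∨ j = B ∨ j = W) → a i j ≤ p ^ 3)
    (y : Fin n → ℝ)
    (hyB : (n : ℝ) * y B = Real.log (∏ k, a B k))
    (hyW : (n : ℝ) * y W = Real.log (∏ k, a W k))
    (hyj : ∀ j, j ≠ B → j ≠ W → 2 * y j - y B - y W = Real.log (a j B * a j W))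
    (hnorm : ∑ i, y i = 0)
    (w : Fin n → ℝ) (hw : ∀ i, w i = Real.exp (y i)) :
    ∀ j, w j ≤ w B ∧ w W ≤ w j :=
  bwm_llsm_no_ordinal_violation_general n p hp B W a hpos hdiag hrec hB hW hub y hyB hyW hyj w hw
end

section
/- Suppose p > 1, n ≥ 4, and a best-worst method matrix satisfies: a_{Bk} ≥ p for all k ≠ B; a_{kW} ≥ p for all k ≠ W; a_{BW} ≥ a_{jW} and a_{BW} ≥ a_{Bj} for all j ≠ B,W; and every entry is at most p^{4/(n−3) + 3}. Then the logarithmic least squares priorities contain no ordinal violation: w_B is maximal and w_W is minimal among all weights. -/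
/-!
Write `D = y B - y W`. By reciprocity `n D = ∑ k, log (a B k * a k W)`, and every summand
is nonnegative and at least `2 log p` for `k ≠ B, W`. For `j ≠ B, W` the LLSM equation reads
`2 y j - y B - y W = log (a j W) - log (a B j)`, so `y W ≤ y j ≤ y B` amounts to
`|log (a B j) - log (a j W)| ≤ D`. Since both logarithms lie in `[log p, log (a B W)]`, this
follows from the lower bound on `n D` once `(n - 3) log (a B W) ≤ (3 n - 5) log p`,
which is the bound `a B W ≤ p ^ (4 / (n - 3) + 3)`.
-/

open Finset Real

theorem Finset.card_compl_mul_add_sum_le_sum {ι : Type*} [Fintype ι] [DecidableEq ι]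
    (f : ι → ℝ) (t : Finset ι) {c : ℝ} (h : ∀ k ∉ t, c ≤ f k) :
    ((Fintype.card ι : ℝ) - #t) * c + ∑ k ∈ t, f k ≤ ∑ k, f k := by
  have hcompl : (#tᶜ • c) ≤ ∑ k ∈ tᶜ, f k :=
    card_nsmul_le_sum _ _ _ fun k hk => h k (mem_compl.mp hk)
  rw [card_compl, nsmul_eq_mul, Nat.cast_sub (card_le_univ t)] at hcompl
  rw [← sum_add_sum_compl t f]
  linarith

theorem abs_sub_le_of_bwm_bounds {N L M u v D : ℝ} (hN : 1 ≤ N) (hu : L ≤ u) (hv : L ≤ v)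
    (huM : u ≤ M) (hvM : v ≤ M) (hLM : (N - 3) * M ≤ (3 * N - 5) * L)
    (hD : (N - 3) * (2 * L) + 2 * M + (u + v) ≤ N * D) : |u - v| ≤ D := by
  have hN0 : 0 < N := by linarith
  rw [abs_sub_le_iff]
  constructor <;> refine le_of_mul_le_mul_left ?_ hN0
  · nlinarith [mul_le_mul_of_nonneg_left hv (by linarith : 0 ≤ N + 1),
      mul_le_mul_of_nonneg_left huM (by linarith : 0 ≤ N - 1)]
  · nlinarith [mul_le_mul_of_nonneg_left hu (by linarith : 0 ≤ N + 1),
      mul_le_mul_of_nonneg_left hvM (by linarith : 0 ≤ N - 1)]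

theorem sub_three_mul_log_le_of_le_rpow {N p x : ℝ} (hN : 3 < N) (hp : 0 < p) (hx : 0 < x)
    (h : x ≤ p ^ (4 / (N - 3) + 3)) : (N - 3) * log x ≤ (3 * N - 5) * log p := by
  have hN3 : 0 < N - 3 := by linarith
  calc (N - 3) * log x ≤ (N - 3) * ((4 / (N - 3) + 3) * log p) := by
        rw [← log_rpow hp]; gcongr
    _ = (3 * N - 5) * log p := by field_simp; ring

section LLSM

variable {ι : Type*} [Fintype ι] {a : ι → ι → ℝ} {B W : ι}

theorem llsm_card_mul_gap_eq {y : ι → ℝ} (hB0 : ∀ k, a B k ≠ 0)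
    (hrecW : ∀ k, a W k * a k W = 1)
    (hyB : (Fintype.card ι : ℝ) * y B = log (∏ k, a B k))
    (hyW : (Fintype.card ι : ℝ) * y W = log (∏ k, a W k)) :
    (Fintype.card ι : ℝ) * (y B - y W) = ∑ k, (log (a B k) + log (a k W)) := by
  have hW0 k : a W k ≠ 0 := left_ne_zero_of_mul_eq_one (hrecW k)
  rw [mul_sub, hyB, hyW, log_prod fun k _ => hB0 k, log_prod fun k _ => hW0 k,
    ← sum_sub_distrib]
  refine sum_congr rfl fun k _ => ?_
  rw [eq_inv_of_mul_eq_one_left (hrecW k), log_inv, sub_neg_eq_add]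

theorem sum_log_bwm_ge [DecidableEq ι] {p : ℝ} {j : ι} (hp : 0 < p) (hBW : B ≠ W)
    (hjB : j ≠ B) (hjW : j ≠ W) (hBB : a B B = 1) (hWW : a W W = 1)
    (hB : ∀ k, k ≠ B → p ≤ a B k) (hW : ∀ k, k ≠ W → p ≤ a k W) :
    ((Fintype.card ι : ℝ) - 3) * (2 * log p) + 2 * log (a B W) + (log (a B j) + log (a j W))
      ≤ ∑ k, (log (a B k) + log (a k W)) := by
  have hB_notMem : B ∉ ({W, j} : Finset ι) := by simp [hBW, hjB.symm]
  have hW_notMem : W ∉ ({j} : Finset ι) := by simp [hjW.symm]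
  have hcard : #({B, W, j} : Finset ι) = 3 := by
    rw [card_insert_of_notMem hB_notMem, card_insert_of_notMem hW_notMem, card_singleton]
  have hbound := card_compl_mul_add_sum_le_sum (fun k => log (a B k) + log (a k W))
    {B, W, j} (c := 2 * log p) fun k hk => by
      simp only [mem_insert, mem_singleton, not_or] at hk
      linarith [log_le_log hp (hB k hk.1), log_le_log hp (hW k hk.2.1)]
  rw [hcard, sum_insert hB_notMem, sum_insert hW_notMem, sum_singleton, hBB, hWW,
    log_one] at hbound
  push_cast at hbound
  linarith

theorem sum_log_bwm_nonneg {p : ℝ} (hp : 1 ≤ p) (hBB : a B B = 1) (hWW : a W W = 1)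
    (hB : ∀ k, k ≠ B → p ≤ a B k) (hW : ∀ k, k ≠ W → p ≤ a k W) :
    0 ≤ ∑ k, (log (a B k) + log (a k W)) := by
  refine sum_nonneg fun k _ => add_nonneg (log_nonneg ?_) (log_nonneg ?_)
  · rcases eq_or_ne k B with rfl | hk
    exacts [hBB.ge, hp.trans (hB k hk)]
  · rcases eq_or_ne k W with rfl | hk
    exacts [hWW.ge, hp.trans (hW k hk)]

end LLSM

theorem bwm_llsm_no_ordinal_violation'_general (n : ℕ) (hn : 4 ≤ n) (p : ℝ) (hp : 1 < p)
    (B W : Fin n) (hBW : B ≠ W)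
    (a : Fin n → Fin n → ℝ)
    (hpos : ∀ i j : Fin n, (i = B ∨ i = W ∨ j = B ∨ j = W) → 0 < a i j)
    (hdiag : ∀ i, a i i = 1)
    (hrec : ∀ i j : Fin n, (i = B ∨ i = W ∨ j = B ∨ j = W) → a i j * a j i = 1)
    (hB : ∀ k, k ≠ B → p ≤ a B k)
    (hW : ∀ k, k ≠ W → p ≤ a k W)
    (hmaxW : ∀ j, j ≠ B → j ≠ W → a j W ≤ a B W)
    (hmaxB : ∀ j, j ≠ B → j ≠ W → a B j ≤ a B W)
    (hub : ∀ i j : Fin n, (i = B ∨ i = W ∨ j = B ∨ j = W) →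
      a i j ≤ p ^ (4 / ((n : ℝ) - 3) + 3))
    (y : Fin n → ℝ)
    (hyB : (n : ℝ) * y B = Real.log (∏ k, a B k))
    (hyW : (n : ℝ) * y W = Real.log (∏ k, a W k))
    (hyj : ∀ j, j ≠ B → j ≠ W → 2 * y j - y B - y W = Real.log (a j B * a j W))
    (w : Fin n → ℝ) (hw : ∀ i, w i = Real.exp (y i)) :
    ∀ j, w j ≤ w B ∧ w W ≤ w j := by
  have hp0 : 0 < p := by linarith
  have hn3 : (3 : ℝ) < n := by exact_mod_cast hn
  have hgap : (n : ℝ) * (y B - y W) = ∑ k, (log (a B k) + log (a k W)) := by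
    simpa using llsm_card_mul_gap_eq (fun k => (hpos B k (.inl rfl)).ne')
      (fun k => hrec W k (.inr (.inl rfl))) (by simpa using hyB) (by simpa using hyW)
  have hWB : y W ≤ y B := by
    have := hgap ▸ sum_log_bwm_nonneg hp.le (hdiag B) (hdiag W) hB hW
    nlinarith
  intro j
  simp only [hw, exp_le_exp]
  rcases eq_or_ne j B with rfl | hjB
  · exact ⟨le_rfl, hWB⟩
  rcases eq_or_ne j W with rfl | hjW
  · exact ⟨hWB, le_rfl⟩
  have hposjW := hpos j W (.inr (.inr (.inr rfl)))
  have hdev : |log (a B j) - log (a j W)| ≤ y B - y W :=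
    abs_sub_le_of_bwm_bounds (by linarith) (log_le_log hp0 (hB j hjB))
      (log_le_log hp0 (hW j hjW)) (log_le_log (hpos B j (.inl rfl)) (hmaxB j hjB hjW))
      (log_le_log hposjW (hmaxW j hjB hjW))
      (sub_three_mul_log_le_of_le_rpow hn3 hp0 (hpos B W (.inl rfl)) (hub B W (.inl rfl)))
      (by simpa [hgap] using sum_log_bwm_ge hp0 hBW hjB hjW (hdiag B) (hdiag W) hB hW)
  have hyj_log : 2 * y j - y B - y W = log (a j W) - log (a B j) := by
    rw [hyj j hjB hjW, log_mul (hpos j B (.inr (.inr (.inl rfl)))).ne' hposjW.ne',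
      eq_inv_of_mul_eq_one_left (hrec j B (.inr (.inr (.inl rfl)))), log_inv]
    ring
  rw [abs_sub_le_iff] at hdev
  constructor <;> linarith

/-- Theorem 2 of the paper: if moreover `a_{BW}` is the largest
comparison and every entry is at most `p^{4/(n−3)+3}`, then the LLSM priorities
contain no ordinal violation. -/
theorem bwm_llsm_no_ordinal_violation' (n : ℕ) (hn : 4 ≤ n) (p : ℝ) (hp : 1 < p)
    (B W : Fin n) (hBW : B ≠ W)
    (a : Fin n → Fin n → ℝ)
    (hpos : ∀ i j : Fin n, (i = B ∨ i = W ∨ j = B ∨ j = W) → 0 < a i j)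
    (hdiag : ∀ i, a i i = 1)
    (hrec : ∀ i j : Fin n, (i = B ∨ i = W ∨ j = B ∨ j = W) → a i j * a j i = 1)
    (hB : ∀ k, k ≠ B → p ≤ a B k)
    (hW : ∀ k, k ≠ W → p ≤ a k W)
    (hmaxW : ∀ j, j ≠ B → j ≠ W → a j W ≤ a B W)
    (hmaxB : ∀ j, j ≠ B → j ≠ W → a B j ≤ a B W)
    (hub : ∀ i j : Fin n, (i = B ∨ i = W ∨ j = B ∨ j = W) →
      a i j ≤ p ^ (4 / ((n : ℝ) - 3) + 3))
    (y : Fin n → ℝ)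
    (hyB : (n : ℝ) * y B = Real.log (∏ k, a B k))
    (hyW : (n : ℝ) * y W = Real.log (∏ k, a W k))
    (hyj : ∀ j, j ≠ B → j ≠ W → 2 * y j - y B - y W = Real.log (a j B * a j W))
    (hnorm : ∑ i, y i = 0)
    (w : Fin n → ℝ) (hw : ∀ i, w i = Real.exp (y i)) :
    ∀ j, w j ≤ w B ∧ w W ≤ w j :=
  bwm_llsm_no_ordinal_violation'_general n hn p hp B W hBW a hpos hdiag hrec hB hW hmaxW hmaxB hub y
    hyB hyW hyj w hw
end

section
/- Consider the 6×6 best-worst method matrix with best alternative 1 and worst alternative 6, where a_{1k} = 2 for k = 2,…,6; a_{26} = 9; a_{j6} = 2 for j = 3,4,5; and reciprocal entries accordingly (other comparisons missing). The normalized logarithmic least squares solution y satisfies y_2 > y_1; hence the LLSM priorities exhibit an ordinal violation (the second alternative receives a higher weight than the designated best alternative). -/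
/-- Example 1 of the paper: for the 6×6 best-worst method matrix with
`a_{1k} = 2` (k = 2,…,6), `a_{26} = 9`, `a_{j6} = 2` (j = 3,4,5), the normalized LLSM
solution satisfies `y_2 > y_1`, i.e. the second alternative gets a higher weight
than the designated best alternative: an ordinal violation. -/
theorem bwm_example_ordinal_violation (y : Fin 6 → ℝ)
    (h1 : 6 * y 0 = Real.log (2 * 2 * 2 * 2 * 2))
    (h6 : 6 * y 5 = Real.log ((1 / 2) * (1 / 9) * (1 / 2) * (1 / 2) * (1 / 2)))
    (h2 : 2 * y 1 - y 0 - y 5 = Real.log ((1 / 2) * 9)) :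
    y 0 < y 1 ∧ Real.exp (y 0) < Real.exp (y 1) := by
  have e1 : ((2:ℝ) * 2 * 2 * 2 * 2) = 32 := by norm_num
  have e2 : ((1/2:ℝ) * (1/9) * (1/2) * (1/2) * (1/2)) = (144:ℝ)⁻¹ := by norm_num
  have e3 : ((1/2:ℝ) * 9) = (9/2 : ℝ) := by norm_num
  rw [e1] at h1
  rw [e2, Real.log_inv] at h6
  rw [e3] at h2
  have hmul : Real.log 32 + Real.log 144 = Real.log 4608 := by
    rw [← Real.log_mul (by norm_num) (by norm_num)]; norm_num
  have hpow : Real.log ((9/2 : ℝ) ^ (6:ℕ)) = 6 * Real.log (9/2) := by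
    rw [Real.log_pow]; norm_num
  have hlt : Real.log (4608:ℝ) < Real.log ((9/2 : ℝ) ^ (6:ℕ)) :=
    Real.log_lt_log (by norm_num) (by norm_num)
  rw [hpow] at hlt
  have key : y 0 < y 1 := by linarith
  exact ⟨key, Real.exp_lt_exp.mpr key⟩
end

section
/- Suppose p > 1 and a best-worst method matrix on n ≥ 3 alternatives satisfies a_{Bk} ≥ p for all k ≠ B and a_{Wk} ≤ 1/p for all k ≠ W, and all entries are at most p^3. Then for every j ≠ B,W the inequality ∏_{k=1}^n a_{Bk} ≥ (∏_{k≠j} a_{Wk}) · a_{jB}^n · a_{jW}^{n−1} holds. -/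
/-! Every factor on the left is bounded by a power of `p`: the `W`-row has `n - 2` entries
`≤ 1/p` besides `a_{WW} = 1`, reciprocity turns `a_{Bj} ≥ p` into `a_{jB} ≤ 1/p`, and
`a_{jW} ≤ p^3`. The exponents add up to `3(n-1) - (n-2) - n = n - 1`, while the `B`-row has
`n - 1` entries `≥ p`. -/

open Finset

namespace Finset

variable {ι R : Type*} [CommMonoidWithZero R] [Preorder R] [ZeroLEOneClass R] [PosMulMono R]
  {s : Finset ι} {f : ι → R} {i : ι} {c : R}

theorem prod_le_pow_card_sub_one_of_eq_one (hi : i ∈ s) (hfi : f i = 1)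
    (h0 : ∀ k ∈ s, 0 ≤ f k) (hc : ∀ k ∈ s, k ≠ i → f k ≤ c) :
    ∏ k ∈ s, f k ≤ c ^ (#s - 1) := by
  classical
  rw [← mul_prod_erase s f hi, hfi, one_mul, ← card_erase_of_mem hi, ← prod_const]
  exact prod_le_prod (fun k hk ↦ h0 k (mem_of_mem_erase hk))
    fun k hk ↦ hc k (mem_of_mem_erase hk) (ne_of_mem_erase hk)

theorem pow_card_sub_one_le_prod_of_eq_one (hi : i ∈ s) (hfi : f i = 1) (hc0 : 0 ≤ c)
    (hc : ∀ k ∈ s, k ≠ i → c ≤ f k) :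
    c ^ (#s - 1) ≤ ∏ k ∈ s, f k := by
  classical
  rw [← mul_prod_erase s f hi, hfi, one_mul, ← card_erase_of_mem hi, ← prod_const]
  exact prod_le_prod (fun _ _ ↦ hc0) fun k hk ↦ hc k (mem_of_mem_erase hk) (ne_of_mem_erase hk)

end Finset

theorem bwm_key_inequality_general (n : ℕ) (p : ℝ) (hp : 1 < p)
    (B W : Fin n)
    (a : Fin n → Fin n → ℝ)
    (hpos : ∀ i j : Fin n, (i = B ∨ i = W ∨ j = B ∨ j = W) → 0 < a i j)
    (hdiag : ∀ i, a i i = 1)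
    (hrec : ∀ i j : Fin n, (i = B ∨ i = W ∨ j = B ∨ j = W) → a i j * a j i = 1)
    (hB : ∀ k, k ≠ B → p ≤ a B k)
    (hW : ∀ k, k ≠ W → a W k ≤ 1 / p)
    (hub : ∀ i j : Fin n, (i = B ∨ i = W ∨ j = B ∨ j = W) → a i j ≤ p ^ 3) :
    ∀ j, j ≠ B → j ≠ W →
      (∏ k ∈ univ.erase j, a W k) * a j B ^ n * a j W ^ (n - 1) ≤ ∏ k, a B k := by
  intro j hjB hjW
  obtain ⟨m, rfl⟩ : ∃ m, n = m + 2 :=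
    ⟨n - 2, by have := Fin.val_ne_of_ne hjW; have := j.isLt; have := W.isLt; omega⟩
  have hp0 : 0 < p := zero_lt_one.trans hp
  have hrow_W : ∏ k ∈ univ.erase j, a W k ≤ (1 / p) ^ m := by
    simpa using prod_le_pow_card_sub_one_of_eq_one (mem_erase.mpr ⟨hjW.symm, mem_univ W⟩)
      (hdiag W) (fun k _ ↦ (hpos W k (.inr (.inl rfl))).le) fun k _ ↦ hW k
  have hrow_B : p ^ (m + 1) ≤ ∏ k, a B k := by
    simpa using pow_card_sub_one_le_prod_of_eq_one (mem_univ B) (hdiag B) hp0.le fun k _ ↦ hB k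
  have hjB' : a j B ≤ 1 / p := by
    rw [eq_one_div_of_mul_eq_one_right (hrec B j (.inl rfl))]
    exact one_div_le_one_div_of_le hp0 (hB j hjB)
  have hjW' : a j W ≤ p ^ 3 := hub j W (.inr (.inr (.inr rfl)))
  have hrow_W0 : 0 ≤ ∏ k ∈ univ.erase j, a W k :=
    prod_nonneg fun k _ ↦ (hpos W k (.inr (.inl rfl))).le
  have hjB0 : 0 ≤ a j B := (hpos j B (.inr (.inr (.inl rfl)))).le
  have hjW0 : 0 ≤ a j W := (hpos j W (.inr (.inr (.inr rfl)))).le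
  calc (∏ k ∈ univ.erase j, a W k) * a j B ^ (m + 2) * a j W ^ (m + 1)
      ≤ (1 / p) ^ m * (1 / p) ^ (m + 2) * (p ^ 3) ^ (m + 1) := by gcongr
    _ = p ^ (m + 1) := by rw [div_pow, div_pow, one_pow, one_pow]; field_simp; ring
    _ ≤ ∏ k, a B k := hrow_B

/-- key inequality of the proof of Theorem 1: under the bounds
`a_{Bk} ≥ p`, `a_{Wk} ≤ 1/p` and all entries at most `p^3`, for every `j ≠ B,W`,
`∏_k a_{Bk} ≥ (∏_{k≠j} a_{Wk}) · a_{jB}^n · a_{jW}^{n−1}`. -/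
theorem bwm_key_inequality (n : ℕ) (hn : 3 ≤ n) (p : ℝ) (hp : 1 < p)
    (B W : Fin n) (hBW : B ≠ W)
    (a : Fin n → Fin n → ℝ)
    (hpos : ∀ i j : Fin n, (i = B ∨ i = W ∨ j = B ∨ j = W) → 0 < a i j)
    (hdiag : ∀ i, a i i = 1)
    (hrec : ∀ i j : Fin n, (i = B ∨ i = W ∨ j = B ∨ j = W) → a i j * a j i = 1)
    (hB : ∀ k, k ≠ B → p ≤ a B k)
    (hW : ∀ k, k ≠ W → a W k ≤ 1 / p)
    (hub : ∀ i j : Fin n, (i = B ∨ i = W ∨ j = B ∨ j = W) → a i j ≤ p ^ 3) :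
    ∀ j, j ≠ B → j ≠ W →
      (∏ k ∈ univ.erase j, a W k) * a j B ^ n * a j W ^ (n - 1) ≤ ∏ k, a B k :=
  bwm_key_inequality_general n p hp B W a hpos hdiag hrec hB hW hub
end

section
/- Fix B = 1 and W = 6 with all nine entries a_{12},…,a_{16}, a_{26},…,a_{56} in {2,…,9}. The LLSM weights give y_j > y_1 for j = 2 (say) exactly when a_{16} = 2, a_{12} = 2, a_{26} = 9, and among the six entries a_{13},a_{14},a_{15},a_{36},a_{46},a_{56}, at most one equals 3 and the rest equal 2. Consequently there are exactly 7 such matrices for each choice of j ∈ {2,3,4,5}, so exactly 28 matrices in which the best alternative does not receive the strictly greatest weight, and by symmetry exactly 28 in which the worst alternative does not receive the strictly smallest weight, for a total of 56 matrices with an ordinal violation. -/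
open Finset
open scoped Classical

/-- The nine free entries of a 6×6 Saaty-scale BWM matrix (best = 1, worst = 6):
`f 0,…,f 4` are `a_{12},…,a_{16}` and `f 5,…,f 8` are `a_{26},…,a_{56}`.
LLSM log-weight of the best alternative. -/
noncomputable def bwmY1 (f : Fin 9 → ℕ) : ℝ :=
  Real.log (∏ i : Fin 5, ((f (Fin.castLE (by omega) i) : ℕ) : ℝ)) / 6

/-- LLSM log-weight of the worst alternative. -/
noncomputable def bwmY6 (f : Fin 9 → ℕ) : ℝ :=
  -(Real.log ((f 4 : ℝ) * ∏ i : Fin 4, ((f ⟨i.1 + 5, by have := i.2; omega⟩ : ℕ) : ℝ))) / 6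

/-- LLSM log-weight of the third alternative `j + 2` (for `j : Fin 4`). -/
noncomputable def bwmYj (f : Fin 9 → ℕ) (j : Fin 4) : ℝ :=
  (bwmY1 f + bwmY6 f +
    Real.log ((f ⟨j.1 + 5, by have := j.2; omega⟩ : ℝ) / (f (Fin.castLE (by omega) j) : ℝ))) / 2

lemma prod5 (f : Fin 9 → ℕ) :
    (∏ i : Fin 5, ((f (Fin.castLE (by omega) i) : ℕ) : ℝ)) =
      ((f 0 * f 1 * f 2 * f 3 * f 4 : ℕ) : ℝ) := by
  rw [Fin.prod_univ_five]
  push_cast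
  rfl

lemma prod4 (f : Fin 9 → ℕ) :
    ((f 4 : ℝ) * ∏ i : Fin 4, ((f ⟨i.1 + 5, by have := i.2; omega⟩ : ℕ) : ℝ)) =
      ((f 4 * (f 5 * f 6 * f 7 * f 8) : ℕ) : ℝ) := by
  rw [Fin.prod_univ_four]
  push_cast
  rfl


lemma absR (A B a b : ℝ) (hA : 0 < A) (hB : 0 < B) (ha : 0 < a) (hb : 0 < b) :
    Real.log A / 6 < (Real.log A / 6 + -(Real.log B) / 6 + Real.log (b / a)) / 2 ↔
      A * B * a ^ 6 < b ^ 6 := by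
  rw [Real.log_div hb.ne' ha.ne']
  have h1 : Real.log (A * B * a ^ 6) = Real.log A + Real.log B + 6 * Real.log a := by
    rw [Real.log_mul (by positivity) (by positivity), Real.log_mul hA.ne' hB.ne',
      Real.log_pow]
    push_cast; ring
  have h2 : Real.log (b ^ 6) = 6 * Real.log b := by rw [Real.log_pow]; push_cast; ring
  rw [← Real.log_lt_log_iff (by positivity) (by positivity : (0:ℝ) < b ^ 6), h1, h2]
  constructor <;> intro h <;> linarith

lemma absR6 (A B a b : ℝ) (hA : 0 < A) (hB : 0 < B) (ha : 0 < a) (hb : 0 < b) :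
    (Real.log A / 6 + -(Real.log B) / 6 + Real.log (b / a)) / 2 < -(Real.log B) / 6 ↔
      A * B * b ^ 6 < a ^ 6 := by
  rw [Real.log_div hb.ne' ha.ne']
  have h1 : Real.log (A * B * b ^ 6) = Real.log A + Real.log B + 6 * Real.log b := by
    rw [Real.log_mul (by positivity) (by positivity), Real.log_mul hA.ne' hB.ne',
      Real.log_pow]
    push_cast; ring
  have h2 : Real.log (a ^ 6) = 6 * Real.log a := by rw [Real.log_pow]; push_cast; ring
  rw [← Real.log_lt_log_iff (by positivity) (by positivity : (0:ℝ) < a ^ 6), h1, h2]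
  constructor <;> intro h <;> linarith

lemma keyY1 (f : Fin 9 → ℕ) (hf : ∀ i, 2 ≤ f i) (j : Fin 4) :
    bwmY1 f < bwmYj f j ↔
      (f 0 * f 1 * f 2 * f 3 * f 4) * (f 4 * (f 5 * f 6 * f 7 * f 8)) *
        (f (Fin.castLE (by omega) j)) ^ 6 < (f ⟨j.1 + 5, by have := j.2; omega⟩) ^ 6 := by
  have h0 : ∀ i : Fin 9, (0:ℝ) < (f i : ℝ) := fun i => by
    have := hf i; exact_mod_cast by omega
  have hP1 : (0:ℝ) < ((f 0 * f 1 * f 2 * f 3 * f 4 : ℕ) : ℝ) := by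
    have := hf 0; have := hf 1; have := hf 2; have := hf 3; have := hf 4
    positivity
  have hP6 : (0:ℝ) < ((f 4 * (f 5 * f 6 * f 7 * f 8) : ℕ) : ℝ) := by
    have := hf 4; have := hf 5; have := hf 6; have := hf 7; have := hf 8
    positivity
  rw [bwmYj, bwmY1, bwmY6, prod5, prod4,
    absR _ _ _ _ hP1 hP6 (h0 _) (h0 _)]
  push_cast
  norm_cast

lemma keyY6 (f : Fin 9 → ℕ) (hf : ∀ i, 2 ≤ f i) (j : Fin 4) :
    bwmYj f j < bwmY6 f ↔
      (f 0 * f 1 * f 2 * f 3 * f 4) * (f 4 * (f 5 * f 6 * f 7 * f 8)) *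
        (f ⟨j.1 + 5, by have := j.2; omega⟩) ^ 6 < (f (Fin.castLE (by omega) j)) ^ 6 := by
  have h0 : ∀ i : Fin 9, (0:ℝ) < (f i : ℝ) := fun i => by
    have := hf i; exact_mod_cast by omega
  have hP1 : (0:ℝ) < ((f 0 * f 1 * f 2 * f 3 * f 4 : ℕ) : ℝ) := by
    have := hf 0; have := hf 1; have := hf 2; have := hf 3; have := hf 4
    positivity
  have hP6 : (0:ℝ) < ((f 4 * (f 5 * f 6 * f 7 * f 8) : ℕ) : ℝ) := by
    have := hf 4; have := hf 5; have := hf 6; have := hf 7; have := hf 8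
    positivity
  rw [bwmYj, bwmY1, bwmY6, prod5, prod4,
    absR6 _ _ _ _ hP1 hP6 (h0 _) (h0 _)]
  push_cast
  norm_cast

/-- at most one of the six entries is a 3, the rest are 2 -/
def Good6 (a b c d e g : ℕ) : Prop :=
  ((a = 2 ∨ a = 3) ∧ b = 2 ∧ c = 2 ∧ d = 2 ∧ e = 2 ∧ g = 2) ∨
  (a = 2 ∧ b = 3 ∧ c = 2 ∧ d = 2 ∧ e = 2 ∧ g = 2) ∨
  (a = 2 ∧ b = 2 ∧ c = 3 ∧ d = 2 ∧ e = 2 ∧ g = 2) ∨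
  (a = 2 ∧ b = 2 ∧ c = 2 ∧ d = 3 ∧ e = 2 ∧ g = 2) ∨
  (a = 2 ∧ b = 2 ∧ c = 2 ∧ d = 2 ∧ e = 3 ∧ g = 2) ∨
  (a = 2 ∧ b = 2 ∧ c = 2 ∧ d = 2 ∧ e = 2 ∧ g = 3)

lemma P115 (a b c d e g : ℕ) (ha : 2 ≤ a) (hb : 2 ≤ b) (hc : 2 ≤ c) (hd : 2 ≤ d)
    (he : 2 ≤ e) (hg : 2 ≤ g) :
    a * b * c * d * e * g ≤ 115 ↔ Good6 a b c d e g := by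
  constructor
  · intro h
    have ha3 : a ≤ 3 := by
      by_contra hcon
      have : (128:ℕ) ≤ a * b * c * d * e * g := by
        calc (128:ℕ) = 4*2*2*2*2*2 := by norm_num
        _ ≤ a * b * c * d * e * g := by gcongr <;> omega
      omega
    have hb3 : b ≤ 3 := by
      by_contra hcon
      have : (128:ℕ) ≤ a * b * c * d * e * g := by
        calc (128:ℕ) = 2*4*2*2*2*2 := by norm_num
        _ ≤ a * b * c * d * e * g := by gcongr <;> omega
      omega
    have hc3 : c ≤ 3 := by
      by_contra hcon
      have : (128:ℕ) ≤ a * b * c * d * e * g := by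
        calc (128:ℕ) = 2*2*4*2*2*2 := by norm_num
        _ ≤ a * b * c * d * e * g := by gcongr <;> omega
      omega
    have hd3 : d ≤ 3 := by
      by_contra hcon
      have : (128:ℕ) ≤ a * b * c * d * e * g := by
        calc (128:ℕ) = 2*2*2*4*2*2 := by norm_num
        _ ≤ a * b * c * d * e * g := by gcongr <;> omega
      omega
    have he3 : e ≤ 3 := by
      by_contra hcon
      have : (128:ℕ) ≤ a * b * c * d * e * g := by
        calc (128:ℕ) = 2*2*2*2*4*2 := by norm_num
        _ ≤ a * b * c * d * e * g := by gcongr <;> omega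
      omega
    have hg3 : g ≤ 3 := by
      by_contra hcon
      have : (128:ℕ) ≤ a * b * c * d * e * g := by
        calc (128:ℕ) = 2*2*2*2*2*4 := by norm_num
        _ ≤ a * b * c * d * e * g := by gcongr <;> omega
      omega
    unfold Good6
    interval_cases a <;> interval_cases b <;> interval_cases c <;> interval_cases d <;>
      interval_cases e <;> interval_cases g <;> omega
  · intro h
    unfold Good6 at h
    rcases h with ⟨h1|h1, h2, h3, h4, h5, h6⟩ | ⟨h1,h2,h3,h4,h5,h6⟩ | ⟨h1,h2,h3,h4,h5,h6⟩ |
      ⟨h1,h2,h3,h4,h5,h6⟩ | ⟨h1,h2,h3,h4,h5,h6⟩ | ⟨h1,h2,h3,h4,h5,h6⟩ <;> subst_vars <;> norm_num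

lemma natChar (x y z a b c d e g : ℕ)
    (hx : 2 ≤ x) (hx9 : x ≤ 9) (hy : 2 ≤ y) (hy9 : y ≤ 9) (hz : 2 ≤ z) (hz9 : z ≤ 9)
    (ha : 2 ≤ a) (hb : 2 ≤ b) (hc : 2 ≤ c) (hd : 2 ≤ d) (he : 2 ≤ e) (hg : 2 ≤ g) :
    x ^ 7 * z ^ 2 * y * (a * b * c * d * e * g) < y ^ 6 ↔
      x = 2 ∧ z = 2 ∧ y = 9 ∧ a * b * c * d * e * g ≤ 115 := by
  have hcancel : x ^ 7 * z ^ 2 * y * (a * b * c * d * e * g) < y ^ 6 ↔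
      x ^ 7 * z ^ 2 * (a * b * c * d * e * g) < y ^ 5 := by
    have h1 : x ^ 7 * z ^ 2 * y * (a * b * c * d * e * g) =
        x ^ 7 * z ^ 2 * (a * b * c * d * e * g) * y := by ring
    have h2 : y ^ 6 = y ^ 5 * y := by ring
    rw [h1, h2, Nat.mul_lt_mul_right (by omega : 0 < y)]
  rw [hcancel]
  have hP64 : 64 ≤ a * b * c * d * e * g := by
    calc (64:ℕ) = 2*2*2*2*2*2 := by norm_num
    _ ≤ a * b * c * d * e * g := by gcongr
  have hy5 : y ^ 5 ≤ 59049 := by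
    calc y ^ 5 ≤ 9 ^ 5 := Nat.pow_le_pow_left hy9 5
    _ = 59049 := by norm_num
  constructor
  · intro h
    have hx2 : x = 2 := by
      by_contra hcon
      have h3 : (559872:ℕ) ≤ x ^ 7 * z ^ 2 * (a * b * c * d * e * g) := by
        calc (559872:ℕ) = 3 ^ 7 * 2 ^ 2 * 64 := by norm_num
        _ ≤ x ^ 7 * z ^ 2 * (a * b * c * d * e * g) := by gcongr <;> omega
      linarith
    have hz2 : z = 2 := by
      by_contra hcon
      have h3 : (73728:ℕ) ≤ x ^ 7 * z ^ 2 * (a * b * c * d * e * g) := by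
        calc (73728:ℕ) = 2 ^ 7 * 3 ^ 2 * 64 := by norm_num
        _ ≤ x ^ 7 * z ^ 2 * (a * b * c * d * e * g) := by gcongr <;> omega
      linarith
    subst hx2; subst hz2
    have h512 : 512 * (a * b * c * d * e * g) < y ^ 5 := by
      calc 512 * (a * b * c * d * e * g) = 2 ^ 7 * 2 ^ 2 * (a * b * c * d * e * g) := by ring
      _ < y ^ 5 := h
    have hy9' : y = 9 := by
      by_contra hcon
      have h8 : y ^ 5 ≤ 32768 := by
        calc y ^ 5 ≤ 8 ^ 5 := Nat.pow_le_pow_left (by omega) 5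
        _ = 32768 := by norm_num
      linarith
    subst hy9'
    norm_num at h512
    exact ⟨rfl, rfl, rfl, by omega⟩
  · rintro ⟨rfl, rfl, rfl, hP⟩
    calc 2 ^ 7 * 2 ^ 2 * (a * b * c * d * e * g) ≤ 512 * 115 := by
          rw [show (2:ℕ)^7*2^2 = 512 by norm_num]
          exact Nat.mul_le_mul_left _ hP
    _ < 9 ^ 5 := by norm_num

lemma charY1_0 (f : Fin 9 → ℕ) (h2 : ∀ i, 2 ≤ f i) (h9 : ∀ i, f i ≤ 9) :
    bwmY1 f < bwmYj f 0 ↔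
      f 0 = 2 ∧ f 4 = 2 ∧ f 5 = 9 ∧ Good6 (f 1) (f 2) (f 3) (f 6) (f 7) (f 8) := by
  rw [keyY1 f h2 0]
  have e1 : (Fin.castLE (by omega : (4:ℕ) ≤ 9) (0:Fin 4) : Fin 9) = 0 := rfl
  have e2 : (⟨((0:Fin 4)).1 + 5, by omega⟩ : Fin 9) = 5 := rfl
  simp only [e1, e2]
  rw [show (f 0*f 1*f 2*f 3*f 4)*(f 4*(f 5*f 6*f 7*f 8))*(f 0)^6 =
    (f 0)^7*(f 4)^2*(f 5)*(f 1*f 2*f 3*f 6*f 7*f 8) from by ring]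
  rw [natChar _ _ _ _ _ _ _ _ _ (h2 0) (h9 0) (h2 5) (h9 5) (h2 4) (h9 4)
    (h2 1) (h2 2) (h2 3) (h2 6) (h2 7) (h2 8),
    P115 _ _ _ _ _ _ (h2 1) (h2 2) (h2 3) (h2 6) (h2 7) (h2 8)]

lemma charY6_0 (f : Fin 9 → ℕ) (h2 : ∀ i, 2 ≤ f i) (h9 : ∀ i, f i ≤ 9) :
    bwmYj f 0 < bwmY6 f ↔
      f 5 = 2 ∧ f 4 = 2 ∧ f 0 = 9 ∧ Good6 (f 1) (f 2) (f 3) (f 6) (f 7) (f 8) := by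
  rw [keyY6 f h2 0]
  have e1 : (Fin.castLE (by omega : (4:ℕ) ≤ 9) (0:Fin 4) : Fin 9) = 0 := rfl
  have e2 : (⟨((0:Fin 4)).1 + 5, by omega⟩ : Fin 9) = 5 := rfl
  simp only [e1, e2]
  rw [show (f 0*f 1*f 2*f 3*f 4)*(f 4*(f 5*f 6*f 7*f 8))*(f 5)^6 =
    (f 5)^7*(f 4)^2*(f 0)*(f 1*f 2*f 3*f 6*f 7*f 8) from by ring]
  rw [natChar _ _ _ _ _ _ _ _ _ (h2 5) (h9 5) (h2 0) (h9 0) (h2 4) (h9 4)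
    (h2 1) (h2 2) (h2 3) (h2 6) (h2 7) (h2 8),
    P115 _ _ _ _ _ _ (h2 1) (h2 2) (h2 3) (h2 6) (h2 7) (h2 8)]

lemma charY1_1 (f : Fin 9 → ℕ) (h2 : ∀ i, 2 ≤ f i) (h9 : ∀ i, f i ≤ 9) :
    bwmY1 f < bwmYj f 1 ↔
      f 1 = 2 ∧ f 4 = 2 ∧ f 6 = 9 ∧ Good6 (f 0) (f 2) (f 3) (f 5) (f 7) (f 8) := by
  rw [keyY1 f h2 1]
  have e1 : (Fin.castLE (by omega : (4:ℕ) ≤ 9) (1:Fin 4) : Fin 9) = 1 := rfl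
  have e2 : (⟨((1:Fin 4)).1 + 5, by omega⟩ : Fin 9) = 6 := rfl
  simp only [e1, e2]
  rw [show (f 0*f 1*f 2*f 3*f 4)*(f 4*(f 5*f 6*f 7*f 8))*(f 1)^6 =
    (f 1)^7*(f 4)^2*(f 6)*(f 0*f 2*f 3*f 5*f 7*f 8) from by ring]
  rw [natChar _ _ _ _ _ _ _ _ _ (h2 1) (h9 1) (h2 6) (h9 6) (h2 4) (h9 4)
    (h2 0) (h2 2) (h2 3) (h2 5) (h2 7) (h2 8),
    P115 _ _ _ _ _ _ (h2 0) (h2 2) (h2 3) (h2 5) (h2 7) (h2 8)]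

lemma charY6_1 (f : Fin 9 → ℕ) (h2 : ∀ i, 2 ≤ f i) (h9 : ∀ i, f i ≤ 9) :
    bwmYj f 1 < bwmY6 f ↔
      f 6 = 2 ∧ f 4 = 2 ∧ f 1 = 9 ∧ Good6 (f 0) (f 2) (f 3) (f 5) (f 7) (f 8) := by
  rw [keyY6 f h2 1]
  have e1 : (Fin.castLE (by omega : (4:ℕ) ≤ 9) (1:Fin 4) : Fin 9) = 1 := rfl
  have e2 : (⟨((1:Fin 4)).1 + 5, by omega⟩ : Fin 9) = 6 := rfl
  simp only [e1, e2]
  rw [show (f 0*f 1*f 2*f 3*f 4)*(f 4*(f 5*f 6*f 7*f 8))*(f 6)^6 =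
    (f 6)^7*(f 4)^2*(f 1)*(f 0*f 2*f 3*f 5*f 7*f 8) from by ring]
  rw [natChar _ _ _ _ _ _ _ _ _ (h2 6) (h9 6) (h2 1) (h9 1) (h2 4) (h9 4)
    (h2 0) (h2 2) (h2 3) (h2 5) (h2 7) (h2 8),
    P115 _ _ _ _ _ _ (h2 0) (h2 2) (h2 3) (h2 5) (h2 7) (h2 8)]

lemma charY1_2 (f : Fin 9 → ℕ) (h2 : ∀ i, 2 ≤ f i) (h9 : ∀ i, f i ≤ 9) :
    bwmY1 f < bwmYj f 2 ↔
      f 2 = 2 ∧ f 4 = 2 ∧ f 7 = 9 ∧ Good6 (f 0) (f 1) (f 3) (f 5) (f 6) (f 8) := by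
  rw [keyY1 f h2 2]
  have e1 : (Fin.castLE (by omega : (4:ℕ) ≤ 9) (2:Fin 4) : Fin 9) = 2 := rfl
  have e2 : (⟨((2:Fin 4)).1 + 5, by omega⟩ : Fin 9) = 7 := rfl
  simp only [e1, e2]
  rw [show (f 0*f 1*f 2*f 3*f 4)*(f 4*(f 5*f 6*f 7*f 8))*(f 2)^6 =
    (f 2)^7*(f 4)^2*(f 7)*(f 0*f 1*f 3*f 5*f 6*f 8) from by ring]
  rw [natChar _ _ _ _ _ _ _ _ _ (h2 2) (h9 2) (h2 7) (h9 7) (h2 4) (h9 4)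
    (h2 0) (h2 1) (h2 3) (h2 5) (h2 6) (h2 8),
    P115 _ _ _ _ _ _ (h2 0) (h2 1) (h2 3) (h2 5) (h2 6) (h2 8)]

lemma charY6_2 (f : Fin 9 → ℕ) (h2 : ∀ i, 2 ≤ f i) (h9 : ∀ i, f i ≤ 9) :
    bwmYj f 2 < bwmY6 f ↔
      f 7 = 2 ∧ f 4 = 2 ∧ f 2 = 9 ∧ Good6 (f 0) (f 1) (f 3) (f 5) (f 6) (f 8) := by
  rw [keyY6 f h2 2]
  have e1 : (Fin.castLE (by omega : (4:ℕ) ≤ 9) (2:Fin 4) : Fin 9) = 2 := rfl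
  have e2 : (⟨((2:Fin 4)).1 + 5, by omega⟩ : Fin 9) = 7 := rfl
  simp only [e1, e2]
  rw [show (f 0*f 1*f 2*f 3*f 4)*(f 4*(f 5*f 6*f 7*f 8))*(f 7)^6 =
    (f 7)^7*(f 4)^2*(f 2)*(f 0*f 1*f 3*f 5*f 6*f 8) from by ring]
  rw [natChar _ _ _ _ _ _ _ _ _ (h2 7) (h9 7) (h2 2) (h9 2) (h2 4) (h9 4)
    (h2 0) (h2 1) (h2 3) (h2 5) (h2 6) (h2 8),
    P115 _ _ _ _ _ _ (h2 0) (h2 1) (h2 3) (h2 5) (h2 6) (h2 8)]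

lemma charY1_3 (f : Fin 9 → ℕ) (h2 : ∀ i, 2 ≤ f i) (h9 : ∀ i, f i ≤ 9) :
    bwmY1 f < bwmYj f 3 ↔
      f 3 = 2 ∧ f 4 = 2 ∧ f 8 = 9 ∧ Good6 (f 0) (f 1) (f 2) (f 5) (f 6) (f 7) := by
  rw [keyY1 f h2 3]
  have e1 : (Fin.castLE (by omega : (4:ℕ) ≤ 9) (3:Fin 4) : Fin 9) = 3 := rfl
  have e2 : (⟨((3:Fin 4)).1 + 5, by omega⟩ : Fin 9) = 8 := rfl
  simp only [e1, e2]
  rw [show (f 0*f 1*f 2*f 3*f 4)*(f 4*(f 5*f 6*f 7*f 8))*(f 3)^6 =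
    (f 3)^7*(f 4)^2*(f 8)*(f 0*f 1*f 2*f 5*f 6*f 7) from by ring]
  rw [natChar _ _ _ _ _ _ _ _ _ (h2 3) (h9 3) (h2 8) (h9 8) (h2 4) (h9 4)
    (h2 0) (h2 1) (h2 2) (h2 5) (h2 6) (h2 7),
    P115 _ _ _ _ _ _ (h2 0) (h2 1) (h2 2) (h2 5) (h2 6) (h2 7)]

lemma charY6_3 (f : Fin 9 → ℕ) (h2 : ∀ i, 2 ≤ f i) (h9 : ∀ i, f i ≤ 9) :
    bwmYj f 3 < bwmY6 f ↔
      f 8 = 2 ∧ f 4 = 2 ∧ f 3 = 9 ∧ Good6 (f 0) (f 1) (f 2) (f 5) (f 6) (f 7) := by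
  rw [keyY6 f h2 3]
  have e1 : (Fin.castLE (by omega : (4:ℕ) ≤ 9) (3:Fin 4) : Fin 9) = 3 := rfl
  have e2 : (⟨((3:Fin 4)).1 + 5, by omega⟩ : Fin 9) = 8 := rfl
  simp only [e1, e2]
  rw [show (f 0*f 1*f 2*f 3*f 4)*(f 4*(f 5*f 6*f 7*f 8))*(f 8)^6 =
    (f 8)^7*(f 4)^2*(f 3)*(f 0*f 1*f 2*f 5*f 6*f 7) from by ring]
  rw [natChar _ _ _ _ _ _ _ _ _ (h2 8) (h9 8) (h2 3) (h9 3) (h2 4) (h9 4)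
    (h2 0) (h2 1) (h2 2) (h2 5) (h2 6) (h2 7),
    P115 _ _ _ _ _ _ (h2 0) (h2 1) (h2 2) (h2 5) (h2 6) (h2 7)]

def SY1_0 : Finset (Fin 9 → ℕ) :=
  {![2,2,2,2,2,9,2,2,2], ![2,3,2,2,2,9,2,2,2], ![2,2,3,2,2,9,2,2,2], ![2,2,2,3,2,9,2,2,2], ![2,2,2,2,2,9,3,2,2], ![2,2,2,2,2,9,2,3,2], ![2,2,2,2,2,9,2,2,3]}

def SY1_1 : Finset (Fin 9 → ℕ) :=
  {![2,2,2,2,2,2,9,2,2], ![3,2,2,2,2,2,9,2,2], ![2,2,3,2,2,2,9,2,2], ![2,2,2,3,2,2,9,2,2], ![2,2,2,2,2,3,9,2,2], ![2,2,2,2,2,2,9,3,2], ![2,2,2,2,2,2,9,2,3]}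

def SY1_2 : Finset (Fin 9 → ℕ) :=
  {![2,2,2,2,2,2,2,9,2], ![3,2,2,2,2,2,2,9,2], ![2,3,2,2,2,2,2,9,2], ![2,2,2,3,2,2,2,9,2], ![2,2,2,2,2,3,2,9,2], ![2,2,2,2,2,2,3,9,2], ![2,2,2,2,2,2,2,9,3]}

def SY1_3 : Finset (Fin 9 → ℕ) :=
  {![2,2,2,2,2,2,2,2,9], ![3,2,2,2,2,2,2,2,9], ![2,3,2,2,2,2,2,2,9], ![2,2,3,2,2,2,2,2,9], ![2,2,2,2,2,3,2,2,9], ![2,2,2,2,2,2,3,2,9], ![2,2,2,2,2,2,2,3,9]}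

def SY6_0 : Finset (Fin 9 → ℕ) :=
  {![9,2,2,2,2,2,2,2,2], ![9,3,2,2,2,2,2,2,2], ![9,2,3,2,2,2,2,2,2], ![9,2,2,3,2,2,2,2,2], ![9,2,2,2,2,2,3,2,2], ![9,2,2,2,2,2,2,3,2], ![9,2,2,2,2,2,2,2,3]}

def SY6_1 : Finset (Fin 9 → ℕ) :=
  {![2,9,2,2,2,2,2,2,2], ![3,9,2,2,2,2,2,2,2], ![2,9,3,2,2,2,2,2,2], ![2,9,2,3,2,2,2,2,2], ![2,9,2,2,2,3,2,2,2], ![2,9,2,2,2,2,2,3,2], ![2,9,2,2,2,2,2,2,3]}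

def SY6_2 : Finset (Fin 9 → ℕ) :=
  {![2,2,9,2,2,2,2,2,2], ![3,2,9,2,2,2,2,2,2], ![2,3,9,2,2,2,2,2,2], ![2,2,9,3,2,2,2,2,2], ![2,2,9,2,2,3,2,2,2], ![2,2,9,2,2,2,3,2,2], ![2,2,9,2,2,2,2,2,3]}

def SY6_3 : Finset (Fin 9 → ℕ) :=
  {![2,2,2,9,2,2,2,2,2], ![3,2,2,9,2,2,2,2,2], ![2,3,2,9,2,2,2,2,2], ![2,2,3,9,2,2,2,2,2], ![2,2,2,9,2,3,2,2,2], ![2,2,2,9,2,2,3,2,2], ![2,2,2,9,2,2,2,3,2]}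

lemma setY1_0 :
    ((Fintype.piFinset (fun _ : Fin 9 => Finset.Icc (2 : ℕ) 9)).filter
      (fun f => bwmY1 f < bwmYj f 0)) = SY1_0 := by
  ext f
  simp only [Finset.mem_filter, Fintype.mem_piFinset, Finset.mem_Icc, SY1_0,
    Finset.mem_insert, Finset.mem_singleton]
  constructor
  · rintro ⟨hm, hlt⟩
    rw [charY1_0 f (fun i => (hm i).1) (fun i => (hm i).2)] at hlt
    obtain ⟨e0, e4, e5, hG⟩ := hlt
    have hfv : f = ![f 0, f 1, f 2, f 3, f 4, f 5, f 6, f 7, f 8] := by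
      funext i; fin_cases i <;> rfl
    unfold Good6 at hG
    rcases hG with ⟨hA|hA, hB, hC, hD, hE, hF⟩ | ⟨hA,hB,hC,hD,hE,hF⟩ | ⟨hA,hB,hC,hD,hE,hF⟩ |
      ⟨hA,hB,hC,hD,hE,hF⟩ | ⟨hA,hB,hC,hD,hE,hF⟩ | ⟨hA,hB,hC,hD,hE,hF⟩ <;>
      rw [hfv] <;> simp only [e0, e4, e5, hA, hB, hC, hD, hE, hF] <;> decide
  · intro h
    have hm : ∀ i, 2 ≤ f i ∧ f i ≤ 9 := by
      rcases h with rfl|rfl|rfl|rfl|rfl|rfl|rfl <;> decide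
    refine ⟨hm, ?_⟩
    rw [charY1_0 f (fun i => (hm i).1) (fun i => (hm i).2)]
    unfold Good6
    rcases h with rfl|rfl|rfl|rfl|rfl|rfl|rfl <;> decide

lemma setY1_1 :
    ((Fintype.piFinset (fun _ : Fin 9 => Finset.Icc (2 : ℕ) 9)).filter
      (fun f => bwmY1 f < bwmYj f 1)) = SY1_1 := by
  ext f
  simp only [Finset.mem_filter, Fintype.mem_piFinset, Finset.mem_Icc, SY1_1,
    Finset.mem_insert, Finset.mem_singleton]
  constructor
  · rintro ⟨hm, hlt⟩
    rw [charY1_1 f (fun i => (hm i).1) (fun i => (hm i).2)] at hlt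
    obtain ⟨e0, e4, e5, hG⟩ := hlt
    have hfv : f = ![f 0, f 1, f 2, f 3, f 4, f 5, f 6, f 7, f 8] := by
      funext i; fin_cases i <;> rfl
    unfold Good6 at hG
    rcases hG with ⟨hA|hA, hB, hC, hD, hE, hF⟩ | ⟨hA,hB,hC,hD,hE,hF⟩ | ⟨hA,hB,hC,hD,hE,hF⟩ |
      ⟨hA,hB,hC,hD,hE,hF⟩ | ⟨hA,hB,hC,hD,hE,hF⟩ | ⟨hA,hB,hC,hD,hE,hF⟩ <;>
      rw [hfv] <;> simp only [e0, e4, e5, hA, hB, hC, hD, hE, hF] <;> decide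
  · intro h
    have hm : ∀ i, 2 ≤ f i ∧ f i ≤ 9 := by
      rcases h with rfl|rfl|rfl|rfl|rfl|rfl|rfl <;> decide
    refine ⟨hm, ?_⟩
    rw [charY1_1 f (fun i => (hm i).1) (fun i => (hm i).2)]
    unfold Good6
    rcases h with rfl|rfl|rfl|rfl|rfl|rfl|rfl <;> decide

lemma setY1_2 :
    ((Fintype.piFinset (fun _ : Fin 9 => Finset.Icc (2 : ℕ) 9)).filter
      (fun f => bwmY1 f < bwmYj f 2)) = SY1_2 := by
  ext f
  simp only [Finset.mem_filter, Fintype.mem_piFinset, Finset.mem_Icc, SY1_2,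
    Finset.mem_insert, Finset.mem_singleton]
  constructor
  · rintro ⟨hm, hlt⟩
    rw [charY1_2 f (fun i => (hm i).1) (fun i => (hm i).2)] at hlt
    obtain ⟨e0, e4, e5, hG⟩ := hlt
    have hfv : f = ![f 0, f 1, f 2, f 3, f 4, f 5, f 6, f 7, f 8] := by
      funext i; fin_cases i <;> rfl
    unfold Good6 at hG
    rcases hG with ⟨hA|hA, hB, hC, hD, hE, hF⟩ | ⟨hA,hB,hC,hD,hE,hF⟩ | ⟨hA,hB,hC,hD,hE,hF⟩ |
      ⟨hA,hB,hC,hD,hE,hF⟩ | ⟨hA,hB,hC,hD,hE,hF⟩ | ⟨hA,hB,hC,hD,hE,hF⟩ <;>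
      rw [hfv] <;> simp only [e0, e4, e5, hA, hB, hC, hD, hE, hF] <;> decide
  · intro h
    have hm : ∀ i, 2 ≤ f i ∧ f i ≤ 9 := by
      rcases h with rfl|rfl|rfl|rfl|rfl|rfl|rfl <;> decide
    refine ⟨hm, ?_⟩
    rw [charY1_2 f (fun i => (hm i).1) (fun i => (hm i).2)]
    unfold Good6
    rcases h with rfl|rfl|rfl|rfl|rfl|rfl|rfl <;> decide

lemma setY1_3 :
    ((Fintype.piFinset (fun _ : Fin 9 => Finset.Icc (2 : ℕ) 9)).filter
      (fun f => bwmY1 f < bwmYj f 3)) = SY1_3 := by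
  ext f
  simp only [Finset.mem_filter, Fintype.mem_piFinset, Finset.mem_Icc, SY1_3,
    Finset.mem_insert, Finset.mem_singleton]
  constructor
  · rintro ⟨hm, hlt⟩
    rw [charY1_3 f (fun i => (hm i).1) (fun i => (hm i).2)] at hlt
    obtain ⟨e0, e4, e5, hG⟩ := hlt
    have hfv : f = ![f 0, f 1, f 2, f 3, f 4, f 5, f 6, f 7, f 8] := by
      funext i; fin_cases i <;> rfl
    unfold Good6 at hG
    rcases hG with ⟨hA|hA, hB, hC, hD, hE, hF⟩ | ⟨hA,hB,hC,hD,hE,hF⟩ | ⟨hA,hB,hC,hD,hE,hF⟩ |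
      ⟨hA,hB,hC,hD,hE,hF⟩ | ⟨hA,hB,hC,hD,hE,hF⟩ | ⟨hA,hB,hC,hD,hE,hF⟩ <;>
      rw [hfv] <;> simp only [e0, e4, e5, hA, hB, hC, hD, hE, hF] <;> decide
  · intro h
    have hm : ∀ i, 2 ≤ f i ∧ f i ≤ 9 := by
      rcases h with rfl|rfl|rfl|rfl|rfl|rfl|rfl <;> decide
    refine ⟨hm, ?_⟩
    rw [charY1_3 f (fun i => (hm i).1) (fun i => (hm i).2)]
    unfold Good6
    rcases h with rfl|rfl|rfl|rfl|rfl|rfl|rfl <;> decide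

lemma setY6_0 :
    ((Fintype.piFinset (fun _ : Fin 9 => Finset.Icc (2 : ℕ) 9)).filter
      (fun f => bwmYj f 0 < bwmY6 f)) = SY6_0 := by
  ext f
  simp only [Finset.mem_filter, Fintype.mem_piFinset, Finset.mem_Icc, SY6_0,
    Finset.mem_insert, Finset.mem_singleton]
  constructor
  · rintro ⟨hm, hlt⟩
    rw [charY6_0 f (fun i => (hm i).1) (fun i => (hm i).2)] at hlt
    obtain ⟨e0, e4, e5, hG⟩ := hlt
    have hfv : f = ![f 0, f 1, f 2, f 3, f 4, f 5, f 6, f 7, f 8] := by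
      funext i; fin_cases i <;> rfl
    unfold Good6 at hG
    rcases hG with ⟨hA|hA, hB, hC, hD, hE, hF⟩ | ⟨hA,hB,hC,hD,hE,hF⟩ | ⟨hA,hB,hC,hD,hE,hF⟩ |
      ⟨hA,hB,hC,hD,hE,hF⟩ | ⟨hA,hB,hC,hD,hE,hF⟩ | ⟨hA,hB,hC,hD,hE,hF⟩ <;>
      rw [hfv] <;> simp only [e0, e4, e5, hA, hB, hC, hD, hE, hF] <;> decide
  · intro h
    have hm : ∀ i, 2 ≤ f i ∧ f i ≤ 9 := by
      rcases h with rfl|rfl|rfl|rfl|rfl|rfl|rfl <;> decide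
    refine ⟨hm, ?_⟩
    rw [charY6_0 f (fun i => (hm i).1) (fun i => (hm i).2)]
    unfold Good6
    rcases h with rfl|rfl|rfl|rfl|rfl|rfl|rfl <;> decide

lemma setY6_1 :
    ((Fintype.piFinset (fun _ : Fin 9 => Finset.Icc (2 : ℕ) 9)).filter
      (fun f => bwmYj f 1 < bwmY6 f)) = SY6_1 := by
  ext f
  simp only [Finset.mem_filter, Fintype.mem_piFinset, Finset.mem_Icc, SY6_1,
    Finset.mem_insert, Finset.mem_singleton]
  constructor
  · rintro ⟨hm, hlt⟩
    rw [charY6_1 f (fun i => (hm i).1) (fun i => (hm i).2)] at hlt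
    obtain ⟨e0, e4, e5, hG⟩ := hlt
    have hfv : f = ![f 0, f 1, f 2, f 3, f 4, f 5, f 6, f 7, f 8] := by
      funext i; fin_cases i <;> rfl
    unfold Good6 at hG
    rcases hG with ⟨hA|hA, hB, hC, hD, hE, hF⟩ | ⟨hA,hB,hC,hD,hE,hF⟩ | ⟨hA,hB,hC,hD,hE,hF⟩ |
      ⟨hA,hB,hC,hD,hE,hF⟩ | ⟨hA,hB,hC,hD,hE,hF⟩ | ⟨hA,hB,hC,hD,hE,hF⟩ <;>
      rw [hfv] <;> simp only [e0, e4, e5, hA, hB, hC, hD, hE, hF] <;> decide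
  · intro h
    have hm : ∀ i, 2 ≤ f i ∧ f i ≤ 9 := by
      rcases h with rfl|rfl|rfl|rfl|rfl|rfl|rfl <;> decide
    refine ⟨hm, ?_⟩
    rw [charY6_1 f (fun i => (hm i).1) (fun i => (hm i).2)]
    unfold Good6
    rcases h with rfl|rfl|rfl|rfl|rfl|rfl|rfl <;> decide

lemma setY6_2 :
    ((Fintype.piFinset (fun _ : Fin 9 => Finset.Icc (2 : ℕ) 9)).filter
      (fun f => bwmYj f 2 < bwmY6 f)) = SY6_2 := by
  ext f
  simp only [Finset.mem_filter, Fintype.mem_piFinset, Finset.mem_Icc, SY6_2,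
    Finset.mem_insert, Finset.mem_singleton]
  constructor
  · rintro ⟨hm, hlt⟩
    rw [charY6_2 f (fun i => (hm i).1) (fun i => (hm i).2)] at hlt
    obtain ⟨e0, e4, e5, hG⟩ := hlt
    have hfv : f = ![f 0, f 1, f 2, f 3, f 4, f 5, f 6, f 7, f 8] := by
      funext i; fin_cases i <;> rfl
    unfold Good6 at hG
    rcases hG with ⟨hA|hA, hB, hC, hD, hE, hF⟩ | ⟨hA,hB,hC,hD,hE,hF⟩ | ⟨hA,hB,hC,hD,hE,hF⟩ |
      ⟨hA,hB,hC,hD,hE,hF⟩ | ⟨hA,hB,hC,hD,hE,hF⟩ | ⟨hA,hB,hC,hD,hE,hF⟩ <;>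
      rw [hfv] <;> simp only [e0, e4, e5, hA, hB, hC, hD, hE, hF] <;> decide
  · intro h
    have hm : ∀ i, 2 ≤ f i ∧ f i ≤ 9 := by
      rcases h with rfl|rfl|rfl|rfl|rfl|rfl|rfl <;> decide
    refine ⟨hm, ?_⟩
    rw [charY6_2 f (fun i => (hm i).1) (fun i => (hm i).2)]
    unfold Good6
    rcases h with rfl|rfl|rfl|rfl|rfl|rfl|rfl <;> decide

lemma setY6_3 :
    ((Fintype.piFinset (fun _ : Fin 9 => Finset.Icc (2 : ℕ) 9)).filter
      (fun f => bwmYj f 3 < bwmY6 f)) = SY6_3 := by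
  ext f
  simp only [Finset.mem_filter, Fintype.mem_piFinset, Finset.mem_Icc, SY6_3,
    Finset.mem_insert, Finset.mem_singleton]
  constructor
  · rintro ⟨hm, hlt⟩
    rw [charY6_3 f (fun i => (hm i).1) (fun i => (hm i).2)] at hlt
    obtain ⟨e0, e4, e5, hG⟩ := hlt
    have hfv : f = ![f 0, f 1, f 2, f 3, f 4, f 5, f 6, f 7, f 8] := by
      funext i; fin_cases i <;> rfl
    unfold Good6 at hG
    rcases hG with ⟨hA|hA, hB, hC, hD, hE, hF⟩ | ⟨hA,hB,hC,hD,hE,hF⟩ | ⟨hA,hB,hC,hD,hE,hF⟩ |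
      ⟨hA,hB,hC,hD,hE,hF⟩ | ⟨hA,hB,hC,hD,hE,hF⟩ | ⟨hA,hB,hC,hD,hE,hF⟩ <;>
      rw [hfv] <;> simp only [e0, e4, e5, hA, hB, hC, hD, hE, hF] <;> decide
  · intro h
    have hm : ∀ i, 2 ≤ f i ∧ f i ≤ 9 := by
      rcases h with rfl|rfl|rfl|rfl|rfl|rfl|rfl <;> decide
    refine ⟨hm, ?_⟩
    rw [charY6_3 f (fun i => (hm i).1) (fun i => (hm i).2)]
    unfold Good6
    rcases h with rfl|rfl|rfl|rfl|rfl|rfl|rfl <;> decide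

lemma bridge (f : Fin 9 → ℕ) :
    Good6 (f 1) (f 2) (f 3) (f 6) (f 7) (f 8) ↔
      ∃ t ∈ ({1, 2, 3, 6, 7, 8} : Finset (Fin 9)),
        (f t = 2 ∨ f t = 3) ∧
        ∀ s ∈ ({1, 2, 3, 6, 7, 8} : Finset (Fin 9)), s ≠ t → f s = 2 := by
  constructor
  · intro hG
    unfold Good6 at hG
    rcases hG with ⟨hA, hB, hC, hD, hE, hF⟩ | ⟨hA,hB,hC,hD,hE,hF⟩ | ⟨hA,hB,hC,hD,hE,hF⟩ |
      ⟨hA,hB,hC,hD,hE,hF⟩ | ⟨hA,hB,hC,hD,hE,hF⟩ | ⟨hA,hB,hC,hD,hE,hF⟩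
    · exact ⟨1, by decide, hA, by intro s hs hne; fin_cases hs <;> simp_all⟩
    · exact ⟨2, by decide, Or.inr hB, by intro s hs hne; fin_cases hs <;> simp_all⟩
    · exact ⟨3, by decide, Or.inr hC, by intro s hs hne; fin_cases hs <;> simp_all⟩
    · exact ⟨6, by decide, Or.inr hD, by intro s hs hne; fin_cases hs <;> simp_all⟩
    · exact ⟨7, by decide, Or.inr hE, by intro s hs hne; fin_cases hs <;> simp_all⟩
    · exact ⟨8, by decide, Or.inr hF, by intro s hs hne; fin_cases hs <;> simp_all⟩
  · rintro ⟨t, ht, hval, hall⟩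
    unfold Good6
    fin_cases ht
    · exact Or.inl ⟨hval, hall 2 (by decide) (by decide), hall 3 (by decide) (by decide),
        hall 6 (by decide) (by decide), hall 7 (by decide) (by decide),
        hall 8 (by decide) (by decide)⟩
    · rcases hval with h | h
      · exact Or.inl ⟨Or.inl (hall 1 (by decide) (by decide)), h,
          hall 3 (by decide) (by decide), hall 6 (by decide) (by decide),
          hall 7 (by decide) (by decide), hall 8 (by decide) (by decide)⟩
      · exact Or.inr (Or.inl ⟨hall 1 (by decide) (by decide), h,
          hall 3 (by decide) (by decide), hall 6 (by decide) (by decide),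
          hall 7 (by decide) (by decide), hall 8 (by decide) (by decide)⟩)
    · rcases hval with h | h
      · exact Or.inl ⟨Or.inl (hall 1 (by decide) (by decide)),
          hall 2 (by decide) (by decide), h, hall 6 (by decide) (by decide),
          hall 7 (by decide) (by decide), hall 8 (by decide) (by decide)⟩
      · exact Or.inr (Or.inr (Or.inl ⟨hall 1 (by decide) (by decide),
          hall 2 (by decide) (by decide), h, hall 6 (by decide) (by decide),
          hall 7 (by decide) (by decide), hall 8 (by decide) (by decide)⟩))
    · rcases hval with h | h
      · exact Or.inl ⟨Or.inl (hall 1 (by decide) (by decide)),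
          hall 2 (by decide) (by decide), hall 3 (by decide) (by decide), h,
          hall 7 (by decide) (by decide), hall 8 (by decide) (by decide)⟩
      · exact Or.inr (Or.inr (Or.inr (Or.inl ⟨hall 1 (by decide) (by decide),
          hall 2 (by decide) (by decide), hall 3 (by decide) (by decide), h,
          hall 7 (by decide) (by decide), hall 8 (by decide) (by decide)⟩)))
    · rcases hval with h | h
      · exact Or.inl ⟨Or.inl (hall 1 (by decide) (by decide)),
          hall 2 (by decide) (by decide), hall 3 (by decide) (by decide),
          hall 6 (by decide) (by decide), h, hall 8 (by decide) (by decide)⟩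
      · exact Or.inr (Or.inr (Or.inr (Or.inr (Or.inl ⟨hall 1 (by decide) (by decide),
          hall 2 (by decide) (by decide), hall 3 (by decide) (by decide),
          hall 6 (by decide) (by decide), h, hall 8 (by decide) (by decide)⟩))))
    · rcases hval with h | h
      · exact Or.inl ⟨Or.inl (hall 1 (by decide) (by decide)),
          hall 2 (by decide) (by decide), hall 3 (by decide) (by decide),
          hall 6 (by decide) (by decide), hall 7 (by decide) (by decide), h⟩
      · exact Or.inr (Or.inr (Or.inr (Or.inr (Or.inr ⟨hall 1 (by decide) (by decide),
          hall 2 (by decide) (by decide), hall 3 (by decide) (by decide),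
          hall 6 (by decide) (by decide), hall 7 (by decide) (by decide), h⟩))))


lemma card0 : ((Fintype.piFinset (fun _ : Fin 9 => Finset.Icc (2 : ℕ) 9)).filter
    (fun f => bwmY1 f < bwmYj f 0)).card = 7 := by rw [setY1_0]; decide
lemma card1 : ((Fintype.piFinset (fun _ : Fin 9 => Finset.Icc (2 : ℕ) 9)).filter
    (fun f => bwmY1 f < bwmYj f 1)).card = 7 := by rw [setY1_1]; decide
lemma card2 : ((Fintype.piFinset (fun _ : Fin 9 => Finset.Icc (2 : ℕ) 9)).filter
    (fun f => bwmY1 f < bwmYj f 2)).card = 7 := by rw [setY1_2]; decide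
lemma card3 : ((Fintype.piFinset (fun _ : Fin 9 => Finset.Icc (2 : ℕ) 9)).filter
    (fun f => bwmY1 f < bwmYj f 3)).card = 7 := by rw [setY1_3]; decide

lemma cardY1 (j : Fin 4) :
    ((Fintype.piFinset (fun _ : Fin 9 => Finset.Icc (2 : ℕ) 9)).filter
      (fun f => bwmY1 f < bwmYj f j)).card = 7 := by
  fin_cases j
  exacts [card0, card1, card2, card3]

lemma unionY1 :
    ((Fintype.piFinset (fun _ : Fin 9 => Finset.Icc (2 : ℕ) 9)).filter
      (fun f => ∃ j : Fin 4, bwmY1 f < bwmYj f j)) = SY1_0 ∪ SY1_1 ∪ SY1_2 ∪ SY1_3 := by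
  ext f
  simp only [Finset.mem_filter, Finset.mem_union]
  constructor
  · rintro ⟨hm, j, hj⟩
    fin_cases j
    · exact Or.inl (Or.inl (Or.inl (by rw [← setY1_0]; exact Finset.mem_filter.2 ⟨hm, hj⟩)))
    · exact Or.inl (Or.inl (Or.inr (by rw [← setY1_1]; exact Finset.mem_filter.2 ⟨hm, hj⟩)))
    · exact Or.inl (Or.inr (by rw [← setY1_2]; exact Finset.mem_filter.2 ⟨hm, hj⟩))
    · exact Or.inr (by rw [← setY1_3]; exact Finset.mem_filter.2 ⟨hm, hj⟩)
  · rintro (((h | h) | h) | h)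
    · rw [← setY1_0] at h; obtain ⟨hm, hlt⟩ := Finset.mem_filter.1 h; exact ⟨hm, 0, hlt⟩
    · rw [← setY1_1] at h; obtain ⟨hm, hlt⟩ := Finset.mem_filter.1 h; exact ⟨hm, 1, hlt⟩
    · rw [← setY1_2] at h; obtain ⟨hm, hlt⟩ := Finset.mem_filter.1 h; exact ⟨hm, 2, hlt⟩
    · rw [← setY1_3] at h; obtain ⟨hm, hlt⟩ := Finset.mem_filter.1 h; exact ⟨hm, 3, hlt⟩

lemma unionY6 :
    ((Fintype.piFinset (fun _ : Fin 9 => Finset.Icc (2 : ℕ) 9)).filter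
      (fun f => ∃ j : Fin 4, bwmYj f j < bwmY6 f)) = SY6_0 ∪ SY6_1 ∪ SY6_2 ∪ SY6_3 := by
  ext f
  simp only [Finset.mem_filter, Finset.mem_union]
  constructor
  · rintro ⟨hm, j, hj⟩
    fin_cases j
    · exact Or.inl (Or.inl (Or.inl (by rw [← setY6_0]; exact Finset.mem_filter.2 ⟨hm, hj⟩)))
    · exact Or.inl (Or.inl (Or.inr (by rw [← setY6_1]; exact Finset.mem_filter.2 ⟨hm, hj⟩)))
    · exact Or.inl (Or.inr (by rw [← setY6_2]; exact Finset.mem_filter.2 ⟨hm, hj⟩))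
    · exact Or.inr (by rw [← setY6_3]; exact Finset.mem_filter.2 ⟨hm, hj⟩)
  · rintro (((h | h) | h) | h)
    · rw [← setY6_0] at h; obtain ⟨hm, hlt⟩ := Finset.mem_filter.1 h; exact ⟨hm, 0, hlt⟩
    · rw [← setY6_1] at h; obtain ⟨hm, hlt⟩ := Finset.mem_filter.1 h; exact ⟨hm, 1, hlt⟩
    · rw [← setY6_2] at h; obtain ⟨hm, hlt⟩ := Finset.mem_filter.1 h; exact ⟨hm, 2, hlt⟩
    · rw [← setY6_3] at h; obtain ⟨hm, hlt⟩ := Finset.mem_filter.1 h; exact ⟨hm, 3, hlt⟩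

set_option maxRecDepth 100000 in
/-- Proposition 1 of the paper: characterization of the matrices with
`y_2 > y_1`; exactly 7 matrices per third alternative, 28 matrices where the best does
not get the strictly greatest weight, 28 where the worst does not get the strictly
smallest weight, 56 with an ordinal violation. -/
theorem bwm_violation_count :
    (∀ f ∈ Fintype.piFinset (fun _ : Fin 9 => Finset.Icc (2 : ℕ) 9),
      (bwmY1 f < bwmYj f 0 ↔
        f 4 = 2 ∧ f 0 = 2 ∧ f 5 = 9 ∧
        ∃ t ∈ ({1, 2, 3, 6, 7, 8} : Finset (Fin 9)),
          (f t = 2 ∨ f t = 3) ∧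
          ∀ s ∈ ({1, 2, 3, 6, 7, 8} : Finset (Fin 9)), s ≠ t → f s = 2)) ∧
    (∀ j : Fin 4,
      ((Fintype.piFinset (fun _ : Fin 9 => Finset.Icc (2 : ℕ) 9)).filter
        (fun f => bwmY1 f < bwmYj f j)).card = 7) ∧
    ((Fintype.piFinset (fun _ : Fin 9 => Finset.Icc (2 : ℕ) 9)).filter
      (fun f => ∃ j : Fin 4, bwmY1 f < bwmYj f j)).card = 28 ∧
    ((Fintype.piFinset (fun _ : Fin 9 => Finset.Icc (2 : ℕ) 9)).filter
      (fun f => ∃ j : Fin 4, bwmYj f j < bwmY6 f)).card = 28 ∧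
    ((Fintype.piFinset (fun _ : Fin 9 => Finset.Icc (2 : ℕ) 9)).filter
      (fun f => (∃ j : Fin 4, bwmY1 f < bwmYj f j) ∨
        (∃ j : Fin 4, bwmYj f j < bwmY6 f))).card = 56 := by
  refine ⟨?_, cardY1, ?_, ?_, ?_⟩
  · intro f hf
    simp only [Fintype.mem_piFinset, Finset.mem_Icc] at hf
    rw [charY1_0 f (fun i => (hf i).1) (fun i => (hf i).2), bridge]
    constructor
    · rintro ⟨h0, h4, h5, ht⟩; exact ⟨h4, h0, h5, ht⟩
    · rintro ⟨h4, h0, h5, ht⟩; exact ⟨h0, h4, h5, ht⟩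
  · rw [unionY1]; decide
  · rw [unionY6]; decide
  · rw [Finset.filter_or, unionY1, unionY6]; decide
end
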